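/- Let K be a commutative ring containing ℚ and let p ∈ K[x₁,…,xₙ, y₁,…,yₙ] be a polynomial satisfying ∂p/∂xᵢ = ∂p/∂yᵢ for all i = 1,…,n. Then there exists a polynomial q ∈ K[t₁,…,tₙ] with p(x,y) = q(x₁+y₁, …, xₙ+yₙ). Conversely every such q(x+y) satisfies the equations. (This is the polynomial model of the statement that the kernel of the Grothendieck connection D_G = d + R, with R = −Σ dxⁱ ∂/∂yⁱ for the trivial formal exponential map φ(x,y) = x + y, consists exactly of Taylor expansions Tφ*f of globally defined functions.) -/

import Mathlib

/-!
Under the shear `x ↦ x + y`, `y ↦ y` the chain rule turns `∂/∂xᵢ` into `∂/∂xᵢ` and `∂/∂yᵢ` into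
`∂/∂xᵢ + ∂/∂yᵢ`, so the equations `∂p/∂xᵢ = ∂p/∂yᵢ` say exactly that the pull-back of `p` along
the inverse shear has no `yᵢ`-derivative. Over a `ℚ`-algebra that means it does not involve
the `yᵢ` at all, i.e. it is a polynomial `q(x)`, and shearing back gives `p = q(x + y)`.
-/

namespace MvPolynomial

theorem pderiv_aeval_eq_of_forall_X {R σ τ : Type*} [CommSemiring R]
    (g : σ → MvPolynomial τ R) (j : τ)
    (D : Derivation R (MvPolynomial σ R) (MvPolynomial σ R))
    (hX : ∀ i, pderiv j (g i) = aeval g (D (X i))) (p : MvPolynomial σ R) :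
    pderiv j (aeval g p) = aeval g (D p) := by
  induction p using MvPolynomial.induction_on with
  | C a => simp [derivation_C]
  | add p q hp hq => simp only [map_add, hp, hq]
  | mul_X p i hp =>
    simp only [map_mul, aeval_X, Derivation.leibniz, smul_eq_mul, map_add, hp, hX]

theorem notMem_vars_of_pderiv_eq_zero {R σ : Type*} [CommSemiring R] [Algebra ℚ R] {i : σ}
    {p : MvPolynomial σ R} (h : pderiv i p = 0) : i ∉ p.vars := by
  intro hi
  obtain ⟨d, hd, hdi⟩ := (mem_vars_iff_mem_support i).mp hi
  set m := d - Finsupp.single i 1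
  have hd_eq : m + Finsupp.single i 1 = d :=
    tsub_add_cancel_of_le (Finsupp.single_le_iff.mpr (Nat.one_le_iff_ne_zero.mpr
      (Finsupp.mem_support_iff.mp hdi)))
  have hunit : IsUnit ((m i : R) + 1) := by
    simpa using (IsUnit.mk0 ((m i : ℚ) + 1) (by positivity)).map (algebraMap ℚ R)
  have := congrArg (coeff m) h
  rw [coeff_pderiv, hd_eq, coeff_zero] at this
  exact (mem_support_iff.mp hd) (hunit.mul_left_eq_zero.mp this)

theorem forall_pderiv_inr_eq_zero_iff {R σ τ : Type*} [CommSemiring R] [Algebra ℚ R]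
    (p : MvPolynomial (σ ⊕ τ) R) :
    (∀ j, pderiv (Sum.inr j) p = 0) ↔ ∃ q, rename Sum.inl q = p := by
  classical
  constructor
  · intro h
    refine exists_rename_eq_of_vars_subset_range p _ Sum.inl_injective ?_
    rintro (i | j) hj
    · exact ⟨i, rfl⟩
    · exact absurd hj (notMem_vars_of_pderiv_eq_zero (h j))
  · rintro ⟨q, rfl⟩ j
    refine pderiv_eq_zero_of_notMem_vars fun hj ↦ ?_
    simpa using vars_rename Sum.inl q hj

noncomputable def shear (R σ : Type*) [CommRing R] :
    MvPolynomial (σ ⊕ σ) R ≃ₐ[R] MvPolynomial (σ ⊕ σ) R :=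
  AlgEquiv.ofAlgHom
    (aeval (Sum.elim (fun i ↦ X (Sum.inl i) + X (Sum.inr i)) (fun i ↦ X (Sum.inr i))))
    (aeval (Sum.elim (fun i ↦ X (Sum.inl i) - X (Sum.inr i)) (fun i ↦ X (Sum.inr i))))
    (algHom_ext <| by rintro (i | i) <;> simp)
    (algHom_ext <| by rintro (i | i) <;> simp)

section Shear

variable {R σ : Type*} [CommRing R]

theorem shear_rename_inl (q : MvPolynomial σ R) :
    shear R σ (rename Sum.inl q) = aeval (fun i ↦ X (Sum.inl i) + X (Sum.inr i)) q := by
  rw [shear, AlgEquiv.ofAlgHom_apply, aeval_rename]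
  rfl

theorem pderiv_inl_shear (i : σ) (p : MvPolynomial (σ ⊕ σ) R) :
    pderiv (Sum.inl i) (shear R σ p) = shear R σ (pderiv (Sum.inl i) p) := by
  classical
  refine pderiv_aeval_eq_of_forall_X _ _ _ ?_ p
  rintro (k | k) <;> simp [pderiv_X, Pi.single_apply]

theorem pderiv_inr_shear (i : σ) (p : MvPolynomial (σ ⊕ σ) R) :
    pderiv (Sum.inr i) (shear R σ p) =
      shear R σ (pderiv (Sum.inl i) p + pderiv (Sum.inr i) p) := by
  classical
  rw [← Derivation.add_apply]
  refine pderiv_aeval_eq_of_forall_X _ _ _ ?_ p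
  rintro (k | k) <;> simp [pderiv_X, Pi.single_apply]

theorem pderiv_inl_shear_eq_pderiv_inr_shear_iff (i : σ) (p : MvPolynomial (σ ⊕ σ) R) :
    pderiv (Sum.inl i) (shear R σ p) = pderiv (Sum.inr i) (shear R σ p) ↔
      pderiv (Sum.inr i) p = 0 := by
  rw [pderiv_inl_shear, pderiv_inr_shear, (shear R σ).injective.eq_iff, left_eq_add]

end Shear

end MvPolynomial

open MvPolynomial

/-- Over a commutative ring `K` containing `ℚ`, a polynomial
`p ∈ K[x₁,…,xₙ,y₁,…,yₙ]` satisfies `∂p/∂xᵢ = ∂p/∂yᵢ` for all `i` if and only if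
there is a polynomial `q ∈ K[t₁,…,tₙ]` with `p(x,y) = q(x+y)` (the kernel of the
Grothendieck connection for the trivial formal exponential map consists exactly of
the Taylor expansions of global functions). -/
theorem grothendieck_kernel_polynomial
    {K : Type*} [CommRing K] [Algebra ℚ K] (n : ℕ)
    (p : MvPolynomial (Fin n ⊕ Fin n) K) :
    (∀ i : Fin n,
        MvPolynomial.pderiv (Sum.inl i) p = MvPolynomial.pderiv (Sum.inr i) p) ↔
      ∃ q : MvPolynomial (Fin n) K,
        p = MvPolynomial.aeval
          (fun i : Fin n =>
            MvPolynomial.X (Sum.inl i) + MvPolynomial.X (Sum.inr i)) q := by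
  rw [← (shear K (Fin n)).apply_symm_apply p]
  simp only [pderiv_inl_shear_eq_pderiv_inr_shear_iff, forall_pderiv_inr_eq_zero_iff,
    ← shear_rename_inl, (shear K (Fin n)).injective.eq_iff]
  exact exists_congr fun _ ↦ eq_comm
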